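/- Set λ_max = (4/h²) sin²(π(N−1)/(2N)) and α₁² = λ_max / (1 − (1/12)h²λ_max). Then for every w ∈ H_h one has (−Λw, w)_h ≤ α₁² (s_N w, w)_h, and equality holds for some nonzero w (the constant α₁² is sharp); moreover α₁² < (3/2)λ_max < 6/h². -/

import Mathlib

open Real

lemma amgm_aux (t a b : ℝ) (ht : 0 < t) : -2*a*b ≤ t*a^2 + t⁻¹*b^2 := by
  have h1 : t*(t*a^2 + t⁻¹*b^2 + 2*a*b) = (t*a+b)^2 := by field_simp; ring
  nlinarith [sq_nonneg (t*a+b)]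

lemma sum_Icc1 (n : ℕ) (f : ℕ → ℝ) : ∑ k ∈ Finset.Icc 1 n, f k = ∑ i ∈ Finset.range n, f (i+1) := by
  rw [← Finset.Ico_add_one_right_eq_Icc, Finset.sum_Ico_eq_sum_range]
  simp [add_comm]

lemma sin_rec (N : ℕ) (k : ℕ) :
    Real.sin (π * ((k+2 : ℕ) : ℝ) / N) + Real.sin (π * (k : ℕ) / N)
      = 2 * Real.cos (π / N) * Real.sin (π * ((k+1 : ℕ) : ℝ) / N) := by
  push_cast
  rw [show π * ((k:ℝ) + 2) / N = π*((k:ℝ)+1)/N + π/N by ring,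
      show π * (k:ℝ) / N = π*((k:ℝ)+1)/N - π/N by ring,
      Real.sin_add, Real.sin_sub]
  ring

lemma key_ineq (N : ℕ) (hN : 2 ≤ N) (w : ℕ → ℝ) :
    ∑ i ∈ Finset.range (N-2), (-2 * w (i+1) * w (i+2))
      ≤ 2 * Real.cos (π / N) * ∑ i ∈ Finset.range (N-1), (w (i+1))^2 := by
  set s : ℕ → ℝ := fun k => Real.sin (π * k / N) with hs
  have hNpos : (0:ℝ) < N := by positivity
  have hspos : ∀ k : ℕ, 1 ≤ k → k ≤ N-1 → 0 < s k := by
    intro k h1 h2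
    apply Real.sin_pos_of_pos_of_lt_pi
    · have : (0:ℝ) < (k:ℝ) := by exact_mod_cast h1
      positivity
    · rw [div_lt_iff₀ hNpos]
      have : (k:ℝ) < N := by exact_mod_cast (by omega : k < N)
      nlinarith [Real.pi_pos]
  have hs0 : s 0 = 0 := by simp [hs]
  have hsN : s N = 0 := by
    have : π * N / N = π := by field_simp
    simp [hs, this]
  have step1 : ∑ i ∈ Finset.range (N-2), (-2 * w (i+1) * w (i+2))
      ≤ ∑ i ∈ Finset.range (N-2), ((s (i+2)/s (i+1)) * w (i+1)^2 + (s (i+1)/s (i+2)) * w (i+2)^2) := by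
    apply Finset.sum_le_sum
    intro i hi
    have hi' : i < N-2 := Finset.mem_range.mp hi
    have h1 : 0 < s (i+1) := hspos _ (by omega) (by omega)
    have h2 : 0 < s (i+2) := hspos _ (by omega) (by omega)
    have := amgm_aux (s (i+2)/s (i+1)) (w (i+1)) (w (i+2)) (by positivity)
    rw [inv_div] at this
    linarith
  have hF : ∑ i ∈ Finset.range (N-2), (s (i+2)/s (i+1)) * w (i+1)^2
      = ∑ i ∈ Finset.range (N-1), (s (i+2)/s (i+1)) * w (i+1)^2 := by
    rw [show N-1 = (N-2)+1 by omega, Finset.sum_range_succ,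
        show N-2+2 = N by omega, hsN]
    simp
  have hG : ∑ i ∈ Finset.range (N-2), (s (i+1)/s (i+2)) * w (i+2)^2
      = ∑ i ∈ Finset.range (N-1), (s i/s (i+1)) * w (i+1)^2 := by
    rw [show N-1 = (N-2)+1 by omega, Finset.sum_range_succ' (fun i => (s i/s (i+1)) * w (i+1)^2), hs0]
    simp
  calc ∑ i ∈ Finset.range (N-2), (-2 * w (i+1) * w (i+2))
      ≤ ∑ i ∈ Finset.range (N-2), ((s (i+2)/s (i+1)) * w (i+1)^2 + (s (i+1)/s (i+2)) * w (i+2)^2) := step1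
    _ = ∑ i ∈ Finset.range (N-1), ((s (i+2)/s (i+1)) * w (i+1)^2 + (s i/s (i+1)) * w (i+1)^2) := by
        rw [Finset.sum_add_distrib, hF, hG, ← Finset.sum_add_distrib]
    _ = ∑ i ∈ Finset.range (N-1), 2 * Real.cos (π / N) * (w (i+1))^2 := by
        apply Finset.sum_congr rfl
        intro i hi
        have him : i < N - 1 := Finset.mem_range.mp hi
        have h1 : 0 < s (i+1) := hspos _ (by omega) (by omega)
        have hrec : s (i+2) + s i = 2 * Real.cos (π / N) * s (i+1) := sin_rec N i
        have hq : s (i+2)/s (i+1) + s i/s (i+1) = 2 * Real.cos (π / N) := by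
          rw [← add_div, hrec, mul_div_assoc, div_self (ne_of_gt h1), mul_one]
        calc (s (i+2)/s (i+1)) * w (i+1)^2 + (s i/s (i+1)) * w (i+1)^2
            = (s (i+2)/s (i+1) + s i/s (i+1)) * w (i+1)^2 := by ring
          _ = 2 * Real.cos (π / N) * (w (i+1))^2 := by rw [hq]
    _ = 2 * Real.cos (π / N) * ∑ i ∈ Finset.range (N-1), (w (i+1))^2 := by
        rw [Finset.mul_sum]


set_option maxHeartbeats 2000000 in
/-- with λ_max = (4/h²)sin²(π(N−1)/(2N)) and α₁² = λ_max/(1 − (1/12)h²λ_max),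
one has (−Λw, w)_h ≤ α₁²(s_N w, w)_h for all w ∈ H_h, with equality attained at some
nonzero w (sharpness), and moreover α₁² < (3/2)λ_max < 6/h².
Here (Λw)_k = (w_{k+1} − 2w_k + w_{k−1})/h², s_N = I + (1/12)h²Λ, and
(v,w)_h = h Σ_{k=1}^{N−1} v_k w_k on mesh functions vanishing at k = 0 and k = N. -/
theorem stmt_9 (X : ℝ) (hX : 0 < X) (N : ℕ) (hN : 2 ≤ N) (h : ℝ) (hh : h = X / N)
    (lamMax : ℝ) (hlamMax : lamMax = 4 / h^2 * Real.sin (π * (N-1 : ℕ) / (2 * N))^2)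
    (α₁sq : ℝ) (hα : α₁sq = lamMax / (1 - (1/12) * h^2 * lamMax)) :
    (∀ w : ℕ → ℝ, w 0 = 0 → w N = 0 →
      h * ∑ k ∈ Finset.Icc 1 (N-1), (-((w (k+1) - 2 * w k + w (k-1)) / h^2)) * w k
        ≤ α₁sq * (h * ∑ k ∈ Finset.Icc 1 (N-1),
            (w k + (1/12) * h^2 * ((w (k+1) - 2 * w k + w (k-1)) / h^2)) * w k)) ∧
    (∃ w : ℕ → ℝ, w 0 = 0 ∧ w N = 0 ∧ (∃ k ∈ Finset.Icc 1 (N-1), w k ≠ 0) ∧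
      h * ∑ k ∈ Finset.Icc 1 (N-1), (-((w (k+1) - 2 * w k + w (k-1)) / h^2)) * w k
        = α₁sq * (h * ∑ k ∈ Finset.Icc 1 (N-1),
            (w k + (1/12) * h^2 * ((w (k+1) - 2 * w k + w (k-1)) / h^2)) * w k)) ∧
    α₁sq < (3/2) * lamMax ∧ (3/2) * lamMax < 6 / h^2 := by
  have hNR : (0:ℝ) < N := by positivity
  have hNR2 : (2:ℝ) ≤ N := by exact_mod_cast hN
  have hhp : 0 < h := by rw [hh]; positivity
  have hhne : h ≠ 0 := ne_of_gt hhp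
  set γ : ℝ := Real.cos (π / N) with hγdef
  -- γ < 1
  have hγ1 : γ < 1 := by
    have h1 : (0:ℝ) < π/(2*N) := by positivity
    have h2 : Real.sin (π/(2*N)) > 0 := by
      apply Real.sin_pos_of_pos_of_lt_pi h1
      rw [div_lt_iff₀ (by positivity)]
      nlinarith [Real.pi_pos]
    have h3 : π/(N:ℝ) = 2*(π/(2*N)) := by field_simp
    rw [hγdef, h3, Real.cos_two_mul]
    nlinarith [Real.sin_sq_add_cos_sq (π/(2*N))]
  -- γ ≥ 0
  have hγ0 : 0 ≤ γ := by
    apply Real.cos_nonneg_of_mem_Icc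
    constructor
    · have : (0:ℝ) ≤ π/N := by positivity
      linarith [Real.pi_pos]
    · rw [div_le_div_iff₀ hNR (by norm_num : (0:ℝ) < 2)]
      nlinarith [Real.pi_pos]
  -- lamMax = (2+2γ)/h²
  have hc2 : γ = 2 * Real.cos (π/(2*N))^2 - 1 := by
    rw [hγdef, show π/(N:ℝ) = 2*(π/(2*N)) by field_simp, Real.cos_two_mul]
  have hlam : lamMax = (2+2*γ)/h^2 := by
    rw [hlamMax, show ((N-1:ℕ):ℝ) = (N:ℝ)-1 by
        push_cast [Nat.cast_sub (by omega : 1 ≤ N)]; ring,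
      show π*((N:ℝ)-1)/(2*N) = π/2 - π/(2*N) by field_simp,
      Real.sin_pi_div_two_sub, hc2]
    ring
  have hlampos : 0 < lamMax := by rw [hlam]; positivity
  have hd : 0 < 1 - (1/12) * h^2 * lamMax := by
    have : (1/12) * h^2 * lamMax = (2+2*γ)/12 := by
      rw [hlam]; field_simp
    rw [this]; linarith
  have hdne : (1 - (1/12) * h^2 * lamMax) ≠ 0 := ne_of_gt hd
  refine ⟨?_, ?_, ?_, ?_⟩
  · -- the inequality
    intro w hw0 hwN
    set S : ℝ := ∑ i ∈ Finset.range (N-1), (w (i+1))^2 with hS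
    set C : ℝ := ∑ i ∈ Finset.range (N-2), w (i+1) * w (i+2) with hC
    clear_value S C
    have hQ1 : ∑ i ∈ Finset.range (N-1), w (i+1+1) * w (i+1) = C := by
      rw [show N-1 = (N-2)+1 by omega, Finset.sum_range_succ,
          show N-2+1+1 = N by omega, hwN, hC]
      simp [mul_comm]
    have hQ2 : ∑ i ∈ Finset.range (N-1), w i * w (i+1) = C := by
      rw [show N-1 = (N-2)+1 by omega,
          Finset.sum_range_succ' (fun i => w i * w (i+1)), hw0, hC]
      simp [show ∀ i:ℕ, i+1+1 = i+2 from fun i => rfl]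
    have hA : h * ∑ k ∈ Finset.Icc 1 (N-1), (-((w (k+1) - 2 * w k + w (k-1)) / h^2)) * w k
        = (2*S - 2*C)/h := by
      rw [sum_Icc1, Finset.mul_sum]
      have e1 : (2*S - 2*C)/h
          = ∑ i ∈ Finset.range (N-1),
              (2*(w (i+1))^2 - w (i+1+1) * w (i+1) - w i * w (i+1))/h := by
        rw [← Finset.sum_div]
        congr 1
        rw [Finset.sum_sub_distrib, Finset.sum_sub_distrib, ← Finset.mul_sum, hQ1, hQ2, ← hS]
        ring
      rw [e1]
      apply Finset.sum_congr rfl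
      intro i hi
      simp only [Nat.add_sub_cancel]
      field_simp
      ring
    have hB : h * ∑ k ∈ Finset.Icc 1 (N-1),
          (w k + (1/12) * h^2 * ((w (k+1) - 2 * w k + w (k-1)) / h^2)) * w k
        = h*S - (1/12)*h*(2*S - 2*C) := by
      rw [sum_Icc1, Finset.mul_sum]
      have e1 : h*S - (1/12)*h*(2*S - 2*C)
          = ∑ i ∈ Finset.range (N-1),
              (h*(w (i+1))^2 - (1/12)*h*(2*(w (i+1))^2 - w (i+1+1) * w (i+1) - w i * w (i+1))) := by
        rw [Finset.sum_sub_distrib, ← Finset.mul_sum, ← Finset.mul_sum,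
            Finset.sum_sub_distrib, Finset.sum_sub_distrib, ← Finset.mul_sum, hQ1, hQ2, ← hS]
        ring
      rw [e1]
      apply Finset.sum_congr rfl
      intro i hi
      simp only [Nat.add_sub_cancel]
      field_simp
      ring
    rw [hA, hB]
    -- key estimate: -2C ≤ 2γ S
    have hkeyC : -2*C ≤ 2*γ*S := by
      have := key_ineq N hN w
      have e2 : ∑ i ∈ Finset.range (N-2), (-2 * w (i+1) * w (i+2)) = -2*C := by
        rw [hC, Finset.mul_sum]
        apply Finset.sum_congr rfl
        intro i hi
        ring
      rw [e2] at this
      rw [hS, hγdef]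
      linarith
    have hAle : (2*S - 2*C)/h ≤ lamMax * (h*S) := by
      have e3 : lamMax * (h*S) = ((2+2*γ)*S)/h := by
        rw [hlam]; field_simp
      rw [e3, div_le_div_iff₀ hhp hhp]
      have hSnn : 0 ≤ S := by
        rw [hS]; exact Finset.sum_nonneg (fun i _ => sq_nonneg _)
      nlinarith [hkeyC, sq_nonneg h]
    have hαD : α₁sq * (1 - (1/12)*h^2*lamMax) = lamMax := by
      rw [hα, div_mul_cancel₀ _ hdne]
    have hdm : (2*S - 2*C)/h * h = 2*S - 2*C := div_mul_cancel₀ _ hhne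
    have hE : (1/12)*h*(2*S - 2*C) = (1/12)*h^2*((2*S - 2*C)/h) := by
      linear_combination (-(1/12)*h) * hdm
    rw [hE]
    set A : ℝ := (2*S - 2*C)/h with hAdef
    clear_value A
    rw [← sub_nonneg]
    have goal' : (1 - (1/12)*h^2*lamMax) * (α₁sq*(h*S - (1/12)*h^2*A) - A)
        = lamMax*(h*S) - A := by
      linear_combination (h*S - (1/12)*h^2*A) * hαD
    have h0 : 0 ≤ (1 - (1/12)*h^2*lamMax) * (α₁sq*(h*S - (1/12)*h^2*A) - A) := by
      rw [goal']
      rw [hAdef]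
      linarith [hAle]
    exact (mul_nonneg_iff_of_pos_left hd).mp h0
  · -- sharpness
    refine ⟨fun k => (-1:ℝ)^k * Real.sin (π * k / N), by simp, ?_, ?_, ?_⟩
    · have : π * (N:ℝ) / N = π := by field_simp
      simp [this]
    · refine ⟨1, ?_, ?_⟩
      · simp [Finset.mem_Icc]; omega
      · have h1 : Real.sin (π * (1:ℕ) / N) > 0 := by
          apply Real.sin_pos_of_pos_of_lt_pi
          · push_cast; positivity
          · push_cast
            rw [div_lt_iff₀ hNR]
            nlinarith [Real.pi_pos]
        simp only [pow_one]
        intro hcontra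
        nlinarith [h1]
    · set w : ℕ → ℝ := fun k => (-1:ℝ)^k * Real.sin (π * k / N) with hwdef
      have heig : ∀ i : ℕ, (w (i+1+1) - 2 * w (i+1) + w i) / h^2 = -lamMax * w (i+1) := by
        intro i
        have hrec := sin_rec N i
        have e1 : ((-1:ℝ))^(i+1) = -(-1:ℝ)^i := by rw [pow_succ]; ring
        have e2 : ((-1:ℝ))^(i+1+1) = (-1:ℝ)^i := by rw [pow_succ, pow_succ]; ring
        show ((-1:ℝ)^(i+1+1) * Real.sin (π * ((i+1+1:ℕ):ℝ) / N)
            - 2 * ((-1:ℝ)^(i+1) * Real.sin (π * ((i+1:ℕ):ℝ) / N))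
            + (-1:ℝ)^i * Real.sin (π * (i:ℕ) / N)) / h^2
          = -lamMax * ((-1:ℝ)^(i+1) * Real.sin (π * ((i+1:ℕ):ℝ) / N))
        rw [e1, e2, hlam, show ((i+1+1:ℕ):ℝ) = ((i+2:ℕ):ℝ) by push_cast; ring]
        linear_combination ((-1:ℝ)^i / h^2) * hrec
      rw [sum_Icc1, sum_Icc1]
      have hs1 : ∑ i ∈ Finset.range (N-1),
            (-((w (i+1+1) - 2 * w (i+1) + w (i+1-1)) / h^2)) * w (i+1)
          = ∑ i ∈ Finset.range (N-1), lamMax * (w (i+1))^2 := by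
        apply Finset.sum_congr rfl
        intro i hi
        simp only [Nat.add_sub_cancel]
        rw [heig i]
        ring
      have hs2 : ∑ i ∈ Finset.range (N-1),
            (w (i+1) + (1/12) * h^2 * ((w (i+1+1) - 2 * w (i+1) + w (i+1-1)) / h^2)) * w (i+1)
          = ∑ i ∈ Finset.range (N-1), (1 - (1/12) * h^2 * lamMax) * (w (i+1))^2 := by
        apply Finset.sum_congr rfl
        intro i hi
        simp only [Nat.add_sub_cancel]
        rw [heig i]
        ring
      have hαD : α₁sq * (1 - (1/12)*h^2*lamMax) = lamMax := by
        rw [hα, div_mul_cancel₀ _ hdne]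
      rw [hs1, hs2, ← Finset.mul_sum, ← Finset.mul_sum]
      generalize (∑ i ∈ Finset.range (N-1), (w (i+1))^2 : ℝ) = T
      linear_combination (-(h * T)) * hαD
  · -- α₁sq < 3/2 lamMax
    have hc : (2+2*γ)/h^2 * h^2 = 2+2*γ := div_mul_cancel₀ _ (pow_ne_zero 2 hhne)
    have hsimp : (1/12) * h^2 * lamMax = (2+2*γ)/12 := by
      rw [hlam]; linear_combination (1/12)*hc
    rw [hα, hsimp, div_lt_iff₀ (by linarith : (0:ℝ) < 1 - (2+2*γ)/12)]
    nlinarith [mul_pos hlampos (by linarith : (0:ℝ) < 1 - γ)]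
  · -- 3/2 lamMax < 6/h²
    rw [hlam, show (3:ℝ)/2 * ((2+2*γ)/h^2) = (3+3*γ)/h^2 by ring,
        div_lt_div_iff₀ (by positivity : (0:ℝ) < h^2) (by positivity : (0:ℝ) < h^2)]
    nlinarith [mul_pos (by linarith : (0:ℝ) < 3 - 3*γ) (by positivity : (0:ℝ) < h^2)]
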